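/- arXiv:math-ph/0410062 — 4 statements merged into one kernel-verified Lean document; each statement's English description precedes it below -/
import Mathlib

section
/- Let M be a 2×2 complex matrix of the form [[a, conj(b)], [b, conj(a)]]. Then the operator norm of M equals the supremum over θ ∈ ℝ of ‖M ẽ_θ‖, where ẽ_θ = (1/√2)(e^{iθ}, e^{-iθ})ᵗ. -/
/-!
The operator norm is `‖a‖ + ‖b‖`. It is at most that because `M` is the sum of
`diag(a, conj a)` and `[[0, conj b], [b, 0]]`, which scale every vector by `‖a‖` and `‖b‖`.
It is attained on the vectors `ẽ_θ`: since `M` commutes with conjugating and swapping the two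
coordinates, `M ẽ_θ = (u, conj u) / √2` with `u = a e^{iθ} + conj b e^{-iθ}`, so
`‖M ẽ_θ‖ = ‖u‖`, and `‖u‖ = ‖a‖ + ‖b‖` once `θ` aligns the phases of the two summands.
-/

open Complex ComplexConjugate

section RCLike

variable {𝕜 : Type*} [RCLike 𝕜]

theorem Matrix.toEuclideanLin_fin_two_apply (p q r s x y : 𝕜) :
    Matrix.toEuclideanLin !![p, q; r, s] (WithLp.toLp 2 ![x, y])
      = WithLp.toLp 2 ![p * x + q * y, r * x + s * y] := by
  rw [Matrix.toLpLin_toLp]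
  congr 1
  ext i
  fin_cases i <;> simp [Matrix.mulVec, dotProduct, Fin.sum_univ_two]

theorem EuclideanSpace.norm_toLp_fin_two (x y : 𝕜) :
    ‖(WithLp.toLp 2 ![x, y] : EuclideanSpace 𝕜 (Fin 2))‖ = √(‖x‖ ^ 2 + ‖y‖ ^ 2) := by
  simp [EuclideanSpace.norm_eq, Fin.sum_univ_two]

theorem EuclideanSpace.norm_toLp_fin_two_swap (x y : 𝕜) :
    ‖(WithLp.toLp 2 ![y, x] : EuclideanSpace 𝕜 (Fin 2))‖
      = ‖(WithLp.toLp 2 ![x, y] : EuclideanSpace 𝕜 (Fin 2))‖ := by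
  simp only [EuclideanSpace.norm_toLp_fin_two, add_comm]

theorem EuclideanSpace.norm_toLp_fin_two_mul {c d : 𝕜} (h : ‖d‖ = ‖c‖) (x y : 𝕜) :
    ‖(WithLp.toLp 2 ![c * x, d * y] : EuclideanSpace 𝕜 (Fin 2))‖
      = ‖c‖ * ‖(WithLp.toLp 2 ![x, y] : EuclideanSpace 𝕜 (Fin 2))‖ := by
  simp only [EuclideanSpace.norm_toLp_fin_two, norm_mul, h, mul_pow, ← mul_add,
    Real.sqrt_mul (sq_nonneg _), Real.sqrt_sq (norm_nonneg c)]

end RCLike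

theorem EuclideanSpace.norm_toLp_fin_two_inv_sqrt_two_mul_conj (u : ℂ) :
    ‖(WithLp.toLp 2 ![((1 / √2 : ℝ) : ℂ) * u, ((1 / √2 : ℝ) : ℂ) * conj u] :
      EuclideanSpace ℂ (Fin 2))‖ = ‖u‖ := by
  rw [EuclideanSpace.norm_toLp_fin_two, norm_mul, norm_mul, RCLike.norm_conj, norm_real,
    Real.norm_of_nonneg (by positivity), mul_pow, div_pow, Real.sq_sqrt zero_le_two,
    ← add_mul, add_halves, one_pow, one_mul, Real.sqrt_sq (norm_nonneg u)]

theorem Complex.conj_exp_ofReal_mul_I (θ : ℝ) : conj (exp (θ * I)) = exp (-θ * I) := by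
  rw [← exp_conj, map_mul, conj_ofReal, conj_I, neg_mul, mul_neg]

theorem Complex.mul_exp_ofReal_mul_I (z : ℂ) (t : ℝ) :
    z * exp (t * I) = ‖z‖ * exp ((arg z + t : ℝ) * I) := by
  conv_lhs => arg 1; rw [← norm_mul_exp_arg_mul_I z]
  rw [mul_assoc, ← exp_add, ofReal_add, add_mul]

theorem Complex.exists_norm_mul_exp_add_mul_exp_neg_eq (z w : ℂ) :
    ∃ θ : ℝ, ‖z * exp (θ * I) + w * exp (-θ * I)‖ = ‖z‖ + ‖w‖ := by
  refine ⟨(arg w - arg z) / 2, ?_⟩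
  have hphase : arg w + -((arg w - arg z) / 2) = arg z + (arg w - arg z) / 2 := by ring
  rw [← ofReal_neg, mul_exp_ofReal_mul_I z, mul_exp_ofReal_mul_I w, hphase, ← add_mul,
    norm_mul, norm_exp_ofReal_mul_I, mul_one, ← ofReal_add, norm_real,
    Real.norm_of_nonneg (by positivity)]

theorem ContinuousLinearMap.opNorm_eq_ciSup_of_le_norm_apply {𝕜 E F ι : Type*}
    [NontriviallyNormedField 𝕜] [NormedAddCommGroup E] [NormedSpace 𝕜 E]
    [NormedAddCommGroup F] [NormedSpace 𝕜 F] (T : E →L[𝕜] F) (v : ι → E)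
    (hv : ∀ i, ‖v i‖ ≤ 1) (i₀ : ι) (h : ‖T‖ ≤ ‖T (v i₀)‖) :
    ‖T‖ = ⨆ i, ‖T (v i)‖ := by
  have : Nonempty ι := ⟨i₀⟩
  have hle : ∀ i, ‖T (v i)‖ ≤ ‖T‖ := fun i => T.unit_le_opNorm _ (hv i)
  exact le_antisymm (h.trans (le_ciSup ⟨‖T‖, Set.forall_mem_range.2 hle⟩ i₀)) (ciSup_le hle)

theorem Matrix.toEuclideanLin_of_conj_apply_toLp_conj (a b : ℂ) (c : ℝ) (w : ℂ) :
    Matrix.toEuclideanLin !![a, conj b; b, conj a] (WithLp.toLp 2 ![(c : ℂ) * w, c * conj w])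
      = WithLp.toLp 2
          ![(c : ℂ) * (a * w + conj b * conj w), c * conj (a * w + conj b * conj w)] := by
  rw [Matrix.toEuclideanLin_fin_two_apply]
  congr 3
  · ring
  · simp only [map_add, map_mul, conj_conj]
    ring

theorem Matrix.norm_toEuclideanLin_of_conj_apply_le (a b : ℂ) (v : EuclideanSpace ℂ (Fin 2)) :
    ‖Matrix.toEuclideanLin !![a, conj b; b, conj a] v‖ ≤ (‖a‖ + ‖b‖) * ‖v‖ := by
  obtain ⟨x, y, rfl⟩ : ∃ x y : ℂ, v = WithLp.toLp 2 ![x, y] :=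
    ⟨v 0, v 1, by ext i; fin_cases i <;> rfl⟩
  have hsplit :
      (WithLp.toLp 2 ![a * x + conj b * y, b * x + conj a * y] : EuclideanSpace ℂ (Fin 2))
        = WithLp.toLp 2 ![a * x, conj a * y] + WithLp.toLp 2 ![conj b * y, b * x] := by
    ext i
    fin_cases i <;> simp [add_comm]
  calc _ = ‖(WithLp.toLp 2 ![a * x, conj a * y] : EuclideanSpace ℂ (Fin 2))
          + WithLp.toLp 2 ![conj b * y, b * x]‖ := by
        rw [Matrix.toEuclideanLin_fin_two_apply, hsplit]
    _ ≤ _ := norm_add_le _ _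
    _ = _ := by
      rw [EuclideanSpace.norm_toLp_fin_two_mul (RCLike.norm_conj a),
        EuclideanSpace.norm_toLp_fin_two_mul (RCLike.norm_conj b).symm, RCLike.norm_conj,
        EuclideanSpace.norm_toLp_fin_two_swap, add_mul]

/-- For `M = [[a, conj b],[b, conj a]]`, the operator norm of `M` on
Euclidean `ℂ²` equals `sup_{θ ∈ ℝ} ‖M ẽ_θ‖` with `ẽ_θ = (1/√2)(e^{iθ}, e^{-iθ})ᵗ`. -/
theorem stmt1 (a b : ℂ) :
    ‖LinearMap.toContinuousLinearMap
        (Matrix.toEuclideanLin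
          (Matrix.of ![![a, (starRingEnd ℂ) b], ![b, (starRingEnd ℂ) a]]))‖
      = ⨆ θ : ℝ,
          ‖LinearMap.toContinuousLinearMap
              (Matrix.toEuclideanLin
                (Matrix.of ![![a, (starRingEnd ℂ) b], ![b, (starRingEnd ℂ) a]]))
            ((WithLp.equiv 2 (Fin 2 → ℂ)).symm
              ![(1 / Real.sqrt 2 : ℝ) * Complex.exp (θ * Complex.I),
                (1 / Real.sqrt 2 : ℝ) * Complex.exp (-θ * Complex.I)])‖ := by
  obtain ⟨θ₀, hθ₀⟩ := exists_norm_mul_exp_add_mul_exp_neg_eq a (conj b)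
  simp only [WithLp.equiv_symm_apply, ← conj_exp_ofReal_mul_I] at hθ₀ ⊢
  refine ContinuousLinearMap.opNorm_eq_ciSup_of_le_norm_apply _ _ (fun θ => ?_) θ₀ ?_
  · rw [EuclideanSpace.norm_toLp_fin_two_inv_sqrt_two_mul_conj, norm_exp_ofReal_mul_I]
  · rw [LinearMap.coe_toContinuousLinearMap', Matrix.toEuclideanLin_of_conj_apply_toLp_conj,
      EuclideanSpace.norm_toLp_fin_two_inv_sqrt_two_mul_conj, hθ₀, RCLike.norm_conj]
    exact ContinuousLinearMap.opNorm_le_bound _ (by positivity)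
      (Matrix.norm_toEuclideanLin_of_conj_apply_le a b)
end

section
/- Let A and B be real 2×2 matrices with determinant 1 that commute, and suppose each of A and B either equals ±I or has two distinct complex-conjugate eigenvalues e^{±iη} with η ∈ (0,π) ∪ (π,2π). Then there exists a real invertible 2×2 matrix M and angles η_A, η_B such that M A M⁻¹ and M B M⁻¹ are simultaneously the rotation matrices [[cos η_A, -sin η_A],[sin η_A, cos η_A]] and [[cos η_B, -sin η_B],[sin η_B, cos η_B]]. -/
/-!
If `C v = e^{iθ} v` with `sin θ ≠ 0`, then `C P = P R(-θ)` for the real matrix `P = [Re v | Im v]`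
and the rotation `R`. This `P` is invertible: for singular `P`, multiplying `C P = P R(-θ)` by
`adj P` on the right kills everything except `sin θ • P J adj P`, with `J` the quarter turn, and
the off-diagonal entries of `P J adj P` are `±` the squared norms of the rows of `P`.
A real matrix commuting with `R(-θ)` has the shape `[[a, -b], [b, a]]`, and determinant one makes
it a rotation, so conjugating by `P⁻¹` rotates both matrices as soon as one of them is not `±I`.
-/

open Real Matrix

noncomputable def rotationMatrix (θ : ℝ) : Matrix (Fin 2) (Fin 2) ℝ :=
  !![cos θ, -sin θ; sin θ, cos θ]

lemma exists_eq_rotationMatrix_of_eq_one_or_eq_neg_one {X : Matrix (Fin 2) (Fin 2) ℝ}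
    (hX : X = 1 ∨ X = -1) : ∃ θ, X = rotationMatrix θ := by
  rcases hX with rfl | rfl
  · exact ⟨0, by simp [rotationMatrix, one_fin_two]⟩
  · exact ⟨π, by simp [rotationMatrix, one_fin_two]⟩

lemma exists_cos_sin_eq {a b : ℝ} (h : a ^ 2 + b ^ 2 = 1) :
    ∃ φ : ℝ, cos φ = a ∧ sin φ = b := by
  obtain ⟨φ, hφ⟩ := (Complex.norm_eq_one_iff ⟨a, b⟩).1 (by
    rw [Complex.norm_def, Complex.normSq_mk, ← sq, ← sq, h, Real.sqrt_one])
  exact ⟨φ, by simpa using congrArg Complex.re hφ, by simpa using congrArg Complex.im hφ⟩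

lemma eq_of_commute_rotationMatrix {X : Matrix (Fin 2) (Fin 2) ℝ} {θ : ℝ}
    (hX : Commute X (rotationMatrix θ)) (hθ : sin θ ≠ 0) :
    X = !![X 0 0, -X 1 0; X 1 0, X 0 0] := by
  have h := congrFun₂ hX.eq
  have h00 := h 0 0
  have h01 := h 0 1
  simp only [rotationMatrix, mul_apply, Fin.sum_univ_two, of_apply, cons_val', cons_val_zero,
    cons_val_one, empty_val', cons_val_fin_one] at h00 h01
  have h10 : X 0 1 = -X 1 0 := mul_left_cancel₀ hθ (by linear_combination h00)
  have h11 : X 1 1 = X 0 0 := mul_left_cancel₀ hθ (by linear_combination h01)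
  exact (eta_fin_two X).trans (by rw [h10, h11])

lemma exists_eq_rotationMatrix_of_commute {X : Matrix (Fin 2) (Fin 2) ℝ} {θ : ℝ}
    (hX : Commute X (rotationMatrix θ)) (hθ : sin θ ≠ 0) (hdet : X.det = 1) :
    ∃ φ, X = rotationMatrix φ := by
  have hshape := eq_of_commute_rotationMatrix hX hθ
  rw [hshape, det_fin_two_of] at hdet
  obtain ⟨φ, hcos, hsin⟩ := exists_cos_sin_eq (a := X 0 0) (b := X 1 0) (by linear_combination hdet)
  exact ⟨φ, by rw [hshape, rotationMatrix, hcos, hsin]⟩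

lemma det_ne_zero_of_mul_eq_mul_rotationMatrix {C P : Matrix (Fin 2) (Fin 2) ℝ} {θ : ℝ}
    (hCP : C * P = P * rotationMatrix θ) (hθ : sin θ ≠ 0) (hP : P ≠ 0) : P.det ≠ 0 := by
  intro hdet
  rw [det_fin_two] at hdet
  have h := congrFun₂ hCP
  have h00 := h 0 0
  have h01 := h 0 1
  have h10 := h 1 0
  have h11 := h 1 1
  simp only [rotationMatrix, mul_apply, Fin.sum_univ_two, of_apply, cons_val', cons_val_zero,
    cons_val_one, empty_val', cons_val_fin_one] at h00 h01 h10 h11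
  have hrow0 : sin θ * (P 0 0 ^ 2 + P 0 1 ^ 2) = 0 := by
    linear_combination -C 0 1 * hdet - P 0 1 * h00 + P 0 0 * h01
  have hrow1 : sin θ * (P 1 0 ^ 2 + P 1 1 ^ 2) = 0 := by
    linear_combination C 1 0 * hdet - P 1 1 * h10 + P 1 0 * h11
  obtain ⟨h00, h01⟩ := (add_eq_zero_iff_of_nonneg (sq_nonneg _) (sq_nonneg _)).1
    ((mul_eq_zero.1 hrow0).resolve_left hθ)
  obtain ⟨h10, h11⟩ := (add_eq_zero_iff_of_nonneg (sq_nonneg _) (sq_nonneg _)).1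
    ((mul_eq_zero.1 hrow1).resolve_left hθ)
  apply hP
  ext i j
  fin_cases i <;> fin_cases j <;> simp_all

def reImMatrix {n : Type*} (v : n → ℂ) : Matrix n (Fin 2) ℝ :=
  of fun i => ![(v i).re, (v i).im]

lemma reImMatrix_ne_zero {n : Type*} {v : n → ℂ} (hv : v ≠ 0) : reImMatrix v ≠ 0 := by
  contrapose! hv
  funext i
  exact Complex.ext (by simpa [reImMatrix] using congrFun₂ hv i 0)
    (by simpa [reImMatrix] using congrFun₂ hv i 1)

lemma mul_reImMatrix_of_mulVec_eq {n : Type*} [Fintype n] {C : Matrix n n ℝ} {θ : ℝ}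
    {v : n → ℂ} (hv : C.map (↑) *ᵥ v = Complex.exp (θ * Complex.I) • v) :
    C * reImMatrix v = reImMatrix v * rotationMatrix (-θ) := by
  ext i j
  have hre := congrArg Complex.re (congrFun hv i)
  have him := congrArg Complex.im (congrFun hv i)
  simp only [mulVec, dotProduct, map_apply, Complex.re_sum, Complex.mul_re, Complex.ofReal_re,
    Complex.ofReal_im, zero_mul, sub_zero, Pi.smul_apply, smul_eq_mul, Complex.exp_ofReal_mul_I_re,
    Complex.exp_ofReal_mul_I_im, Complex.im_sum, Complex.mul_im, add_zero] at hre him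
  fin_cases j <;> simp [reImMatrix, rotationMatrix, mul_apply, Fin.sum_univ_two] <;> linarith

lemma exists_conj_eq_rotationMatrix_of_mulVec_eq {C : Matrix (Fin 2) (Fin 2) ℝ} {θ : ℝ}
    {v : Fin 2 → ℂ} (hv0 : v ≠ 0) (hv : C.map (↑) *ᵥ v = Complex.exp (θ * Complex.I) • v)
    (hθ : sin θ ≠ 0) :
    ∃ M : Matrix (Fin 2) (Fin 2) ℝ, IsUnit M.det ∧ M * C * M⁻¹ = rotationMatrix (-θ) := by
  have hCP := mul_reImMatrix_of_mulVec_eq hv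
  have hP : IsUnit (reImMatrix v).det := (det_ne_zero_of_mul_eq_mul_rotationMatrix hCP
    (by rwa [sin_neg, neg_ne_zero]) (reImMatrix_ne_zero hv0)).isUnit
  refine ⟨(reImMatrix v)⁻¹, isUnit_nonsing_inv_det _ hP, ?_⟩
  rw [nonsing_inv_nonsing_inv _ hP, mul_assoc, hCP, nonsing_inv_mul_cancel_left _ _ hP]

lemma exists_conj_eq_rotationMatrix_of_commute {C X : Matrix (Fin 2) (Fin 2) ℝ} {θ : ℝ}
    {v : Fin 2 → ℂ} (hv0 : v ≠ 0) (hv : C.map (↑) *ᵥ v = Complex.exp (θ * Complex.I) • v)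
    (hθ : sin θ ≠ 0) (hXC : Commute X C) (hX : X.det = 1) :
    ∃ M : Matrix (Fin 2) (Fin 2) ℝ, IsUnit M.det ∧ ∃ θC θX : ℝ,
      M * C * M⁻¹ = rotationMatrix θC ∧ M * X * M⁻¹ = rotationMatrix θX := by
  obtain ⟨M, hM, hMC⟩ := exists_conj_eq_rotationMatrix_of_mulVec_eq hv0 hv hθ
  have hconj : Commute (M * X * M⁻¹) (rotationMatrix (-θ)) := by
    rw [← hMC]
    simp only [Commute, SemiconjBy, mul_assoc, nonsing_inv_mul_cancel_left _ _ hM]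
    rw [← mul_assoc X, hXC.eq, mul_assoc]
  obtain ⟨φ, hφ⟩ := exists_eq_rotationMatrix_of_commute hconj (by rwa [sin_neg, neg_ne_zero])
    (by rw [det_conj ((isUnit_iff_isUnit_det M).2 hM), hX])
  exact ⟨M, hM, -θ, φ, hMC, hφ⟩

lemma sin_ne_zero_of_mem_Ioo_union {η : ℝ} (hη : η ∈ Set.Ioo 0 π ∪ Set.Ioo π (2 * π)) :
    sin η ≠ 0 := by
  rcases hη with ⟨h0, hπ⟩ | ⟨hπ, h2π⟩
  · exact (sin_pos_of_pos_of_lt_pi h0 hπ).ne'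
  · rw [← sin_sub_two_pi]
    exact (sin_neg_of_neg_of_neg_pi_lt (by linarith) (by linarith)).ne

/-- Two commuting real `SL(2)` matrices, each equal to `±I` or having two
distinct complex-conjugate eigenvalues `e^{±iη}` with `η ∈ (0,π) ∪ (π,2π)`, can be
simultaneously conjugated (by a real invertible matrix) to rotation matrices. -/
theorem stmt2 (A B : Matrix (Fin 2) (Fin 2) ℝ)
    (hA1 : A.det = 1) (hB1 : B.det = 1) (hcomm : A * B = B * A)
    (hA : A = 1 ∨ A = -1 ∨ ∃ η : ℝ, η ∈ Set.Ioo 0 π ∪ Set.Ioo π (2 * π) ∧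
      ∃ v : Fin 2 → ℂ, v ≠ 0 ∧
        (A.map (fun r => (r : ℂ))).mulVec v = Complex.exp (η * Complex.I) • v)
    (hB : B = 1 ∨ B = -1 ∨ ∃ η : ℝ, η ∈ Set.Ioo 0 π ∪ Set.Ioo π (2 * π) ∧
      ∃ v : Fin 2 → ℂ, v ≠ 0 ∧
        (B.map (fun r => (r : ℂ))).mulVec v = Complex.exp (η * Complex.I) • v) :
    ∃ M : Matrix (Fin 2) (Fin 2) ℝ, IsUnit M.det ∧ ∃ ηA ηB : ℝ,
      M * A * M⁻¹ = Matrix.of ![![Real.cos ηA, -Real.sin ηA], ![Real.sin ηA, Real.cos ηA]] ∧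
      M * B * M⁻¹ = Matrix.of ![![Real.cos ηB, -Real.sin ηB], ![Real.sin ηB, Real.cos ηB]] := by
  rcases or_assoc.2 hA with hA | ⟨η, hη, v, hv0, hAv⟩
  · rcases or_assoc.2 hB with hB | ⟨η, hη, v, hv0, hBv⟩
    · obtain ⟨θA, rfl⟩ := exists_eq_rotationMatrix_of_eq_one_or_eq_neg_one hA
      obtain ⟨θB, rfl⟩ := exists_eq_rotationMatrix_of_eq_one_or_eq_neg_one hB
      exact ⟨1, by simp, θA, θB, by simp [rotationMatrix], by simp [rotationMatrix]⟩
    · obtain ⟨M, hM, θB, θA, hMB, hMA⟩ := exists_conj_eq_rotationMatrix_of_commute hv0 hBv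
        (sin_ne_zero_of_mem_Ioo_union hη) hcomm hA1
      exact ⟨M, hM, θA, θB, hMA, hMB⟩
  · exact exists_conj_eq_rotationMatrix_of_commute hv0 hAv (sin_ne_zero_of_mem_Ioo_union hη)
      hcomm.symm hB1
end

section
/- Define sequences of 2×2 matrices by M⁰_k = M¹_{k-1} M⁰_{k-1} and M¹_k = M⁰_{k-1} M¹_{k-1}, with det M⁰_0 = det M¹_0 = 1. Let x_k = tr M⁰_k. Then for k ≥ 3 with x_{k-1} = x'_{k-1} (where x'_k = tr M¹_k, and indeed x_k = x'_k for k ≥ 1), the Thue-Morse trace-map identity holds: x_k = x_{k-2}² (x_{k-1} - 2) + 2. -/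
/-- Cayley–Hamilton for 2×2 complex matrices. -/
lemma ch2 (M : Matrix (Fin 2) (Fin 2) ℂ) :
    M * M = M.trace • M - M.det • (1 : Matrix (Fin 2) (Fin 2) ℂ) := by
  rw [Matrix.eta_fin_two M]
  ext i j
  fin_cases i <;> fin_cases j <;>
    simp [Matrix.mul_apply, Fin.sum_univ_two, Matrix.trace_fin_two,
      Matrix.det_fin_two, Matrix.one_apply, Matrix.smul_apply] <;> ring

lemma key (A B : Matrix (Fin 2) (Fin 2) ℂ) (hA : A.det = 1) (hB : B.det = 1) :
    ((B * A) * (A * B) * ((A * B) * (B * A))).trace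
      = (B * A).trace ^ 2 * (((A * B) * (B * A)).trace - 2) + 2 := by
  set X := A * B with hX
  set Y := B * A with hY
  have hdX : X.det = 1 := by simp [hX, Matrix.det_mul, hA, hB]
  have hdY : Y.det = 1 := by simp [hY, Matrix.det_mul, hA, hB]
  have htr : X.trace = Y.trace := by rw [hX, hY, Matrix.trace_mul_comm]
  have hcyc : (Y * X * (X * Y)).trace = (X * X * (Y * Y)).trace := by
    rw [show Y * X * (X * Y) = Y * (X * X * Y) by noncomm_ring,
      Matrix.trace_mul_comm, show X * X * Y * Y = X * X * (Y * Y) by noncomm_ring]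
  rw [hcyc, ch2 X, ch2 Y, hdX, hdY, htr]
  simp only [one_smul, Matrix.sub_mul, Matrix.mul_sub, smul_mul_assoc, Matrix.mul_smul,
    Matrix.trace_sub, Matrix.trace_smul, smul_eq_mul, Matrix.mul_one, Matrix.one_mul,
    Matrix.trace_one]
  have h2 : (Matrix.trace (1 : Matrix (Fin 2) (Fin 2) ℂ)) = 2 := by
    simp [Matrix.trace_one]
  rw [htr]
  norm_num
  ring

/-- For the Thue-Morse matrix recursion `M⁰_k = M¹_{k-1} M⁰_{k-1}`,
`M¹_k = M⁰_{k-1} M¹_{k-1}` with unimodular initial matrices, the traces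
`x_k = tr M⁰_k` satisfy the Thue-Morse trace map
`x_k = x_{k-2}² (x_{k-1} - 2) + 2` for `k ≥ 3`. -/
theorem stmt6 (M0 M1 : ℕ → Matrix (Fin 2) (Fin 2) ℂ)
    (hdet0 : (M0 0).det = 1) (hdet1 : (M1 0).det = 1)
    (hrec0 : ∀ k, M0 (k + 1) = M1 k * M0 k)
    (hrec1 : ∀ k, M1 (k + 1) = M0 k * M1 k) :
    ∀ k, 3 ≤ k →
      (M0 k).trace = (M0 (k - 2)).trace ^ 2 * ((M0 (k - 1)).trace - 2) + 2 := by
  have hd : ∀ n, (M0 n).det = 1 ∧ (M1 n).det = 1 := by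
    intro n
    induction n with
    | zero => exact ⟨hdet0, hdet1⟩
    | succ m ih =>
      constructor
      · rw [hrec0, Matrix.det_mul, ih.1, ih.2]; ring
      · rw [hrec1, Matrix.det_mul, ih.1, ih.2]; ring
  intro k hk
  obtain ⟨n, rfl⟩ := Nat.exists_eq_add_of_le hk
  have h2 : 3 + n - 2 = n + 1 := by omega
  have h1 : 3 + n - 1 = n + 2 := by omega
  have e3 : 3 + n = (n + 2) + 1 := by omega
  rw [h2, h1, e3, hrec0 (n+2), hrec1 (n+1), hrec0 (n+1), hrec0 n, hrec1 n]
  exact key (M0 n) (M1 n) (hd n).1 (hd n).2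
end

section
/- (Non-orthogonality criterion, half-line) Let V be locally integrable on [0,∞), E ∈ ℝ, and f ∈ L²(0,∞) with support in [0,s]. For z in the upper half plane let u_{f,z} = (H_D - z)⁻¹ f, where H_D is the Dirichlet Schrödinger operator -d²/dx² + V on [0,∞). Suppose lim_{δ→0+} inf{ ‖(u_{f,z}(s), u_{f,z}'(s))‖ : z ∈ ℂ₊, |z - E| ≤ δ } = 0. Then ⟨u_{0,E}, f⟩ = ∫_0^∞ u_{0,E}(t) conj(f(t)) dt = 0, where u_{0,E} is the solution of -u'' + Vu = Eu with u(0) = 0, u'(0) = 1. -/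
/-!
Write `w = u_{f,z}` and `v = conj u_{0,E}`; since `V` and `E` are real, `v` solves the same
equation as `u_{0,E}`. Green's identity on `[0, s]` (the Wronskian of `w` and `v`, whose value at
`0` vanishes by the Dirichlet condition) reads
  `∫₀ˢ f v = (w(s) v'(s) - w'(s) v(s)) - (z - E) ∫₀ˢ w v`.
Grönwall's inequality, run backwards from `s`, bounds `w` on `[0, s]` by its Cauchy data at `s`
and `∫₀ˢ |f|`, uniformly for `z` near `E`. Choosing `z → E` with Cauchy data at `s` tending to `0`,
the right-hand side tends to `0`, so `∫₀ˢ f v = 0`, which is the conjugate of `⟨u_{0,E}, f⟩`.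

The equations are given in integrated form, where the interval integral of a non-integrable
function is the junk value `0`; a forward Grönwall bound first shows that all integrands involved
are integrable on `[0, s]`.
-/

open MeasureTheory intervalIntegral

open Set Filter Topology
open scoped Interval

section Gronwall

variable {k h : ℝ → ℝ} {a b c : ℝ}

lemma le_mul_of_le_add_integral_of_integral_le_half {T' T B K : ℝ}
    (hk : IntervalIntegrable k volume a T) (hk0 : ∀ x, 0 ≤ k x) (haT' : a ≤ T') (hT'T : T' ≤ T)
    (hK : ∫ x in a..T, k x ≤ K) (hsmall : ∫ x in T'..T, k x ≤ 1 / 2)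
    (hh : ContinuousOn h (Icc a T)) (hh0 : ∀ t ∈ Icc a T, 0 ≤ h t)
    (hle : ∀ t ∈ Icc a T, h t ≤ c + ∫ x in a..t, k x * h x)
    (hcB : c ≤ B) (hB : ∀ t ∈ Icc a T', h t ≤ B) :
    ∀ t ∈ Icc a T, h t ≤ (2 + 2 * K) * B := by
  have haT : a ≤ T := haT'.trans hT'T
  have hT' : T' ∈ uIcc a T := mem_uIcc_of_le haT' hT'T
  obtain ⟨t₀, ht₀, hmax⟩ := isCompact_Icc.exists_isMaxOn (nonempty_Icc.2 haT) hh
  have hB0 : 0 ≤ B := (hh0 a ⟨le_rfl, haT⟩).trans (hB a ⟨le_rfl, haT'⟩)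
  have hkh : IntervalIntegrable (fun x => k x * h x) volume a T :=
    hk.mul_continuousOn (by rwa [uIcc_of_le haT])
  have hkh₁ := hkh.mono_set (uIcc_subset_uIcc_left hT')
  have hkh₂ := hkh.mono_set (uIcc_subset_uIcc_right hT')
  have hfirst : ∫ x in a..T', k x * h x ≤ K * B := calc
    ∫ x in a..T', k x * h x ≤ ∫ x in a..T', k x * B :=
      integral_mono_on haT' hkh₁ ((hk.mono_set (uIcc_subset_uIcc_left hT')).mul_const B)
        fun x hx => mul_le_mul_of_nonneg_left (hB x hx) (hk0 x)
    _ = (∫ x in a..T', k x) * B := integral_mul_const B k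
    _ ≤ K * B := by
      gcongr
      exact (integral_mono_interval le_rfl haT' hT'T (Eventually.of_forall hk0) hk).trans hK
  have hsecond : ∫ x in T'..T, k x * h x ≤ h t₀ / 2 := calc
    ∫ x in T'..T, k x * h x ≤ ∫ x in T'..T, k x * h t₀ :=
      integral_mono_on hT'T hkh₂ ((hk.mono_set (uIcc_subset_uIcc_right hT')).mul_const _)
        fun x hx => mul_le_mul_of_nonneg_left (hmax ⟨haT'.trans hx.1, hx.2⟩) (hk0 x)
    _ = (∫ x in T'..T, k x) * h t₀ := integral_mul_const _ k
    _ ≤ 1 / 2 * h t₀ := by gcongr; exact hh0 t₀ ht₀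
    _ = h t₀ / 2 := by ring
  have hmax_le : h t₀ ≤ c + K * B + h t₀ / 2 := calc
    h t₀ ≤ c + ∫ x in a..t₀, k x * h x := hle t₀ ht₀
    _ ≤ c + ∫ x in a..T, k x * h x := by
      gcongr
      refine integral_mono_interval le_rfl ht₀.1 ht₀.2 ?_ hkh
      filter_upwards [ae_restrict_mem measurableSet_Ioc] with x hx
      exact mul_nonneg (hk0 x) (hh0 x (Ioc_subset_Icc_self hx))
    _ = c + (∫ x in a..T', k x * h x) + ∫ x in T'..T, k x * h x := by
      rw [← integral_add_adjacent_intervals hkh₁ hkh₂, add_assoc]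
    _ ≤ c + K * B + h t₀ / 2 := by gcongr
  intro t ht
  calc h t ≤ h t₀ := hmax ht
    _ ≤ (2 + 2 * K) * B := by linarith

/-- Cutting `[a, T]` at the points where `∫ k` passes `1/2, 1, 3/2, …`, each piece multiplies the
bound by `2 + 2 K`. -/
lemma le_pow_mul_of_le_add_integral {T₀ K : ℝ} (hk : IntervalIntegrable k volume a T₀)
    (hk0 : ∀ x, 0 ≤ k x) (hK : ∫ x in a..T₀, k x ≤ K) (hc : 0 ≤ c)
    (hh : ContinuousOn h (Icc a T₀)) (hh0 : ∀ t ∈ Icc a T₀, 0 ≤ h t)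
    (hle : ∀ t ∈ Icc a T₀, h t ≤ c + ∫ x in a..t, k x * h x) (n : ℕ) :
    ∀ T ∈ Icc a T₀, ∫ x in a..T, k x ≤ n / 2 →
      ∀ t ∈ Icc a T, h t ≤ (2 + 2 * K) ^ (n + 1) * c := by
  have hkT : ∀ {T}, T ∈ Icc a T₀ → IntervalIntegrable k volume a T := fun hT =>
    hk.mono_set (uIcc_subset_uIcc_left (mem_uIcc_of_le hT.1 hT.2))
  have hKT : ∀ {T}, T ∈ Icc a T₀ → ∫ x in a..T, k x ≤ K := fun hT =>
    (integral_mono_interval le_rfl hT.1 hT.2 (Eventually.of_forall hk0) hk).trans hK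
  have step : ∀ {T' T B}, a ≤ T' → T' ≤ T → T ∈ Icc a T₀ → ∫ x in T'..T, k x ≤ 1 / 2 → c ≤ B →
      (∀ t ∈ Icc a T', h t ≤ B) → ∀ t ∈ Icc a T, h t ≤ (2 + 2 * K) * B :=
    fun haT' hT'T hT hsmall hcB hB =>
      le_mul_of_le_add_integral_of_integral_le_half (hkT hT) hk0 haT' hT'T (hKT hT) hsmall
        (hh.mono (Icc_subset_Icc_right hT.2)) (fun t ht => hh0 t ⟨ht.1, ht.2.trans hT.2⟩)
        (fun t ht => hle t ⟨ht.1, ht.2.trans hT.2⟩) hcB hB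
  induction n with
  | zero =>
    refine fun T hT hPT t ht => (step le_rfl hT.1 hT (by simpa using hPT.trans (by norm_num))
      le_rfl ?_ t ht).trans_eq (by ring)
    rintro t ⟨hat, hta⟩
    obtain rfl := le_antisymm hta hat
    simpa using hle t ⟨le_rfl, hT.1.trans hT.2⟩
  | succ n ih =>
    intro T hT hPT
    have hK0 : 0 ≤ K := (integral_nonneg hT.1 fun x _ => hk0 x).trans (hKT hT)
    have hP : ContinuousOn (fun T => ∫ x in a..T, k x) (Icc a T) := by
      simpa only [uIcc_of_le hT.1] using continuousOn_primitive_interval' (hkT hT) left_mem_uIcc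
    obtain ⟨T', hT', hPT'⟩ : ∃ T' ∈ Icc a T,
        ∫ x in a..T', k x = min (n / 2 : ℝ) (∫ x in a..T, k x) := by
      refine intermediate_value_Icc hT.1 hP ⟨?_, min_le_right _ _⟩
      rw [integral_same]
      exact le_min (by positivity) (integral_nonneg hT.1 fun x _ => hk0 x)
    have hT'₀ : T' ∈ Icc a T₀ := ⟨hT'.1, hT'.2.trans hT.2⟩
    have hsmall : ∫ x in T'..T, k x ≤ 1 / 2 := by
      rw [← integral_interval_sub_left (hkT hT) (hkT hT'₀), hPT']
      push_cast at hPT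
      rcases min_cases (n / 2 : ℝ) (∫ x in a..T, k x) with ⟨hm, -⟩ | ⟨hm, -⟩ <;> rw [hm] <;>
        linarith
    refine fun t ht => (step hT'.1 hT'.2 hT hsmall
      (le_mul_of_one_le_left hc (one_le_pow₀ (by linarith)))
      (ih T' hT'₀ (hPT'.trans_le (min_le_left _ _))) t ht).trans_eq (by ring)

theorem exists_forall_le_mul_of_le_add_integral (hk : IntervalIntegrable k volume a b)
    (hk0 : ∀ x, 0 ≤ k x) :
    ∃ C, 0 ≤ C ∧ ∀ T ∈ Icc a b, ∀ (h : ℝ → ℝ) (c : ℝ), 0 ≤ c → ContinuousOn h (Icc a T) →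
      (∀ t ∈ Icc a T, 0 ≤ h t) → (∀ t ∈ Icc a T, h t ≤ c + ∫ x in a..t, k x * h x) →
      ∀ t ∈ Icc a T, h t ≤ C * c := by
  rcases lt_or_ge b a with hba | hab
  · exact ⟨0, le_rfl, fun T hT => absurd hT (by simp [Icc_eq_empty_of_lt hba])⟩
  set K := ∫ x in a..b, k x
  refine ⟨(2 + 2 * K) ^ (⌈2 * K⌉₊ + 1), ?_, fun T hT h c hc hh hh0 hle => ?_⟩
  · have : 0 ≤ K := integral_nonneg hab fun x _ => hk0 x
    positivity
  have hKT : ∫ x in a..T, k x ≤ K :=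
    integral_mono_interval le_rfl hT.1 hT.2 (Eventually.of_forall hk0) hk
  exact le_pow_mul_of_le_add_integral
    (hk.mono_set (uIcc_subset_uIcc_left (mem_uIcc_of_le hT.1 hT.2))) hk0 hKT hc hh hh0 hle _ T
    ⟨hT.1, le_rfl⟩ (hKT.trans (by linarith [Nat.le_ceil (2 * K)]))

theorem exists_forall_le_mul_of_le_add_integral_right (hk : IntervalIntegrable k volume a b)
    (hk0 : ∀ x, 0 ≤ k x) :
    ∃ C, 0 ≤ C ∧ ∀ (h : ℝ → ℝ) (c : ℝ), 0 ≤ c → ContinuousOn h (Icc a b) →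
      (∀ t ∈ Icc a b, 0 ≤ h t) → (∀ t ∈ Icc a b, h t ≤ c + ∫ x in t..b, k x * h x) →
      ∀ t ∈ Icc a b, h t ≤ C * c := by
  have hmaps : MapsTo (fun x => a + b - x) (Icc a b) (Icc a b) := fun x hx =>
    ⟨by linarith [hx.2], by linarith [hx.1]⟩
  obtain ⟨C, hC0, hC⟩ := exists_forall_le_mul_of_le_add_integral (k := fun x => k (a + b - x))
    (by simpa using (hk.comp_sub_left (a + b)).symm) fun x => hk0 _
  refine ⟨C, hC0, fun h c hc hh hh0 hle t ht => ?_⟩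
  have hrefl := hC b (right_mem_Icc.2 (ht.1.trans ht.2)) (fun x => h (a + b - x)) c hc
    (hh.comp (by fun_prop) hmaps) (fun x hx => hh0 _ (hmaps hx)) (fun x hx => by
      simpa [integral_comp_sub_left (fun y => k y * h y) (a + b)] using hle _ (hmaps hx))
    (a + b - t) (hmaps ht)
  simpa using hrefl

end Gronwall

section ProductRule

variable {𝕜 : Type*} [RCLike 𝕜] {φ ψ : ℝ → 𝕜} {a b : ℝ}

lemma integral_mul_primitive_add_primitive_mul (hab : a ≤ b)
    (hφ : IntervalIntegrable φ volume a b) (hψ : IntervalIntegrable ψ volume a b) :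
    (∫ x in a..b, φ x * ∫ y in a..x, ψ y) + ∫ y in a..b, (∫ x in a..y, φ x) * ψ y
      = (∫ x in a..b, φ x) * ∫ y in a..b, ψ y := by
  set μ := volume.restrict (Ioc a b)
  have hφ' : Integrable φ μ := (intervalIntegrable_iff_integrableOn_Ioc_of_le hab).1 hφ
  have hψ' : Integrable ψ μ := (intervalIntegrable_iff_integrableOn_Ioc_of_le hab).1 hψ
  -- Fubini for `φ x * ψ y` on the triangle `y ≤ x` of `(a, b]²`.
  set F := {p : ℝ × ℝ | p.2 ≤ p.1}.indicator fun p => φ p.1 * ψ p.2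
  have hF : Integrable F (μ.prod μ) :=
    (hφ'.mul_prod hψ').indicator (measurableSet_le measurable_snd measurable_fst)
  have hx : ∀ x ∈ Ioc a b, ∫ y, F (x, y) ∂μ = φ x * ∫ y in a..x, ψ y := by
    intro x hx
    have : (fun y => F (x, y)) = (Iic x).indicator fun y => φ x * ψ y := by
      ext y; simp [F, indicator_apply]
    rw [this, MeasureTheory.integral_indicator measurableSet_Iic,
      Measure.restrict_restrict measurableSet_Iic, Iic_inter_Ioc_of_le hx.2,
      MeasureTheory.integral_const_mul, integral_of_le hx.1.le]
  have hy : ∀ y ∈ Ioc a b,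
      ∫ x, F (x, y) ∂μ = ((∫ x in a..b, φ x) - ∫ x in a..y, φ x) * ψ y := by
    intro y hy
    have : (fun x => F (x, y)) = (Ici y).indicator fun x => φ x * ψ y := by
      ext x; simp [F, indicator_apply]
    have hset : Ici y ∩ Ioc a b = Icc y b := by
      ext x
      simp only [mem_inter_iff, mem_Ici, mem_Ioc, mem_Icc]
      exact ⟨fun h => ⟨h.1, h.2.2⟩, fun h => ⟨h.1, hy.1.trans_le h.1, h.2⟩⟩
    rw [this, MeasureTheory.integral_indicator measurableSet_Ici,
      Measure.restrict_restrict measurableSet_Ici, hset, integral_Icc_eq_integral_Ioc,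
      MeasureTheory.integral_mul_const, ← integral_of_le hy.2,
      integral_interval_sub_left hφ
        (hφ.mono_set (uIcc_subset_uIcc_left (mem_uIcc_of_le hy.1.le hy.2)))]
  have hΦ : ContinuousOn (fun y => ∫ x in a..y, φ x) (uIcc a b) :=
    continuousOn_primitive_interval' hφ left_mem_uIcc
  have hswap := integral_integral_swap (μ := μ) (ν := μ) (f := fun x y => F (x, y)) hF
  rw [setIntegral_congr_fun measurableSet_Ioc hx, setIntegral_congr_fun measurableSet_Ioc hy]
    at hswap
  rw [integral_of_le hab, integral_of_le hab, hswap, ← integral_of_le hab, ← integral_of_le hab]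
  simp only [sub_mul]
  rw [integral_sub (hψ.const_mul _) (hψ.continuousOn_mul hΦ),
    intervalIntegral.integral_const_mul]
  ring

theorem integral_mul_add_mul_eq_sub_of_eq_add_integral {F G : ℝ → 𝕜} (hab : a ≤ b)
    (hφ : IntervalIntegrable φ volume a b) (hψ : IntervalIntegrable ψ volume a b)
    (hF : ∀ t ∈ Icc a b, F t = F a + ∫ x in a..t, φ x)
    (hG : ∀ t ∈ Icc a b, G t = G a + ∫ x in a..t, ψ x) :
    ∫ x in a..b, (φ x * G x + F x * ψ x) = F b * G b - F a * G a := by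
  have hΦ : ContinuousOn (fun y => ∫ x in a..y, φ x) (uIcc a b) :=
    continuousOn_primitive_interval' hφ left_mem_uIcc
  have hΨ : ContinuousOn (fun y => ∫ x in a..y, ψ x) (uIcc a b) :=
    continuousOn_primitive_interval' hψ left_mem_uIcc
  have hφΨ := hφ.mul_continuousOn hΨ
  have hΦψ := hψ.continuousOn_mul hΦ
  calc ∫ x in a..b, (φ x * G x + F x * ψ x)
      = ∫ x in a..b, (G a * φ x + F a * ψ x
          + ((φ x * ∫ y in a..x, ψ y) + (∫ y in a..x, φ y) * ψ x)) := by
        refine integral_congr fun x hx => ?_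
        rw [uIcc_of_le hab] at hx
        simp only [hF x hx, hG x hx]
        ring
    _ = G a * (∫ x in a..b, φ x) + F a * (∫ x in a..b, ψ x)
          + ((∫ x in a..b, φ x * ∫ y in a..x, ψ y) + ∫ x in a..b, (∫ y in a..x, φ y) * ψ x) := by
        rw [integral_add ((hφ.const_mul _).add (hψ.const_mul _)) (hφΨ.add hΦψ),
          integral_add (hφ.const_mul _) (hψ.const_mul _), integral_add hφΨ hΦψ,
          intervalIntegral.integral_const_mul, intervalIntegral.integral_const_mul]
    _ = F b * G b - F a * G a := by
        rw [integral_mul_primitive_add_primitive_mul hab hφ hψ, hF b ⟨hab, le_rfl⟩,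
          hG b ⟨hab, le_rfl⟩]
        ring

end ProductRule

lemma aestronglyMeasurable_primitive {E : Type*} [NormedAddCommGroup E] [NormedSpace ℝ E]
    (g : ℝ → E) (a : ℝ) :
    AEStronglyMeasurable (fun t => ∫ x in a..t, g x) (volume.restrict (Ici a)) := by
  set S := {t | a ≤ t ∧ IntervalIntegrable g volume a t}
  have hS : S.OrdConnected := ⟨fun x hx y hy z hz => ⟨hx.1.trans hz.1, hy.2.mono_set
    (by rw [uIcc_of_le (hx.1.trans hz.1), uIcc_of_le hy.1]; exact Icc_subset_Icc_right hz.2)⟩⟩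
  have hprim : ∀ T ∈ S, ContinuousOn (fun t => ∫ x in a..t, g x) (Icc a T) := fun T hT => by
    simpa only [uIcc_of_le hT.1] using continuousOn_primitive_interval' hT.2 left_mem_uIcc
  have hcont : ContinuousOn (fun t => ∫ x in a..t, g x) S := by
    intro t ht
    by_cases hex : ∃ T ∈ S, t < T
    · obtain ⟨T, hT, htT⟩ := hex
      refine (hprim T hT t ⟨ht.1, htT.le⟩).mono_of_mem_nhdsWithin ?_
      exact mem_of_superset (inter_mem_nhdsWithin S (Iio_mem_nhds htT))
        fun x hx => ⟨hx.1.1, le_of_lt hx.2⟩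
    · push Not at hex
      exact (hprim t ht).mono (fun x hx => ⟨hx.1, hex x hx⟩) t ht
  -- Off `S` the primitive is the junk value `0`.
  have hind : (fun t => ∫ x in a..t, g x) =ᵐ[volume.restrict (Ici a)]
      S.indicator fun t => ∫ x in a..t, g x := by
    filter_upwards [ae_restrict_mem measurableSet_Ici] with t (ht : a ≤ t)
    by_cases hint : IntervalIntegrable g volume a t
    · rw [indicator_of_mem (show t ∈ S from ⟨ht, hint⟩)]
    · rw [indicator_of_notMem fun h => hint h.2, integral_undef hint]
  exact (((aestronglyMeasurable_indicator_iff hS.measurableSet).2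
    (hcont.aestronglyMeasurable hS.measurableSet)).restrict).congr hind.symm

section IntegralEquation

variable {𝕜 : Type*} [RCLike 𝕜] {w w' g : ℝ → 𝕜} {a b : ℝ}

lemma continuousOn_of_eq_add_integral (hab : a ≤ b) (hg : IntervalIntegrable g volume a b)
    (hw : ∀ t ∈ Icc a b, w t = w a + ∫ x in a..t, g x) : ContinuousOn w (Icc a b) := by
  refine ContinuousOn.congr (continuousOn_const.add ?_) hw
  simpa only [uIcc_of_le hab] using continuousOn_primitive_interval' hg left_mem_uIcc

lemma continuousOn_of_eq_add_integral₂ (hab : a ≤ b) (hg : IntervalIntegrable g volume a b)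
    (hw : ∀ t ∈ Icc a b, w t = w a + ∫ x in a..t, w' x)
    (hw' : ∀ t ∈ Icc a b, w' t = w' a + ∫ x in a..t, g x) :
    ContinuousOn w (Icc a b) ∧ ContinuousOn w' (Icc a b) :=
  have hw'c := continuousOn_of_eq_add_integral hab hg hw'
  ⟨continuousOn_of_eq_add_integral hab (hw'c.intervalIntegrable_of_Icc hab) hw, hw'c⟩

lemma eq_add_integral_of_eq_add_integral {t₀ t : ℝ} (hg : IntervalIntegrable g volume a b)
    (hw : ∀ t ∈ Icc a b, w t = w a + ∫ x in a..t, g x) (ht₀ : t₀ ∈ Icc a b) (ht : t ∈ Icc a b) :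
    w t = w t₀ + ∫ x in t₀..t, g x := by
  have hsub : ∀ {t}, t ∈ Icc a b → uIcc a t ⊆ uIcc a b := fun ht =>
    uIcc_subset_uIcc_left (mem_uIcc_of_le ht.1 ht.2)
  rw [hw t ht, hw t₀ ht₀, ← integral_interval_sub_left (hg.mono_set (hsub ht))
    (hg.mono_set (hsub ht₀))]
  ring

lemma norm_add_norm_le_of_eq_add_integral {r : ℝ → 𝕜} {m : ℝ → ℝ} {t : ℝ} {w₀ w₀' : 𝕜}
    (hw : ContinuousOn w (uIcc a t)) (hw' : ContinuousOn w' (uIcc a t))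
    (hg : IntervalIntegrable g volume a t) (hm : IntervalIntegrable m volume a t)
    (hr : IntervalIntegrable r volume a t) (hm0 : ∀ x, 0 ≤ m x)
    (hgle : ∀ x ∈ Ι a t, ‖g x‖ ≤ m x * ‖w x‖ + ‖r x‖)
    (hwt : w t = w₀ + ∫ x in a..t, w' x) (hw't : w' t = w₀' + ∫ x in a..t, g x) :
    ‖w t‖ + ‖w' t‖ ≤ ‖w₀‖ + ‖w₀'‖ + (∫ x in Ι a t, ‖r x‖)
      + ∫ x in Ι a t, (1 + m x) * (‖w x‖ + ‖w' x‖) := by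
  have h1 : ‖w t‖ ≤ ‖w₀‖ + ∫ x in Ι a t, ‖w' x‖ := hwt ▸
    (norm_add_le _ _).trans (add_le_add_right norm_integral_le_integral_norm_uIoc _)
  have h2 : ‖w' t‖ ≤ ‖w₀'‖ + ∫ x in Ι a t, ‖g x‖ := hw't ▸
    (norm_add_le _ _).trans (add_le_add_right norm_integral_le_integral_norm_uIoc _)
  have hw'i := intervalIntegrable_iff.1 (hw'.intervalIntegrable (μ := volume)).norm
  have hkh : IntegrableOn (fun x => (1 + m x) * (‖w x‖ + ‖w' x‖)) (Ι a t) :=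
    intervalIntegrable_iff.1 ((intervalIntegrable_const.add hm).mul_continuousOn (by fun_prop))
  have h3 : (∫ x in Ι a t, ‖w' x‖) + ∫ x in Ι a t, ‖g x‖
      ≤ (∫ x in Ι a t, ‖r x‖) + ∫ x in Ι a t, (1 + m x) * (‖w x‖ + ‖w' x‖) := by
    rw [← integral_add hw'i (intervalIntegrable_iff.1 hg.norm),
      ← integral_add (intervalIntegrable_iff.1 hr.norm) hkh]
    refine setIntegral_mono_on (hw'i.add (intervalIntegrable_iff.1 hg.norm))
      ((intervalIntegrable_iff.1 hr.norm).add hkh) measurableSet_uIoc fun x hx => ?_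
    have := hgle x hx
    nlinarith [hm0 x, norm_nonneg (w x), norm_nonneg (w' x)]
  linarith

lemma exists_forall_norm_le_of_intervalIntegrable {q r : ℝ → 𝕜} (hab : a ≤ b)
    (hq : IntervalIntegrable q volume a b) (hr : IntervalIntegrable r volume a b)
    (hg : ∀ x, g x = q x * w x + r x)
    (hw : ∀ t ∈ Icc a b, w t = w a + ∫ x in a..t, w' x)
    (hw' : ∀ t ∈ Icc a b, w' t = w' a + ∫ x in a..t, g x) :
    ∃ M, ∀ T ∈ Icc a b, IntervalIntegrable g volume a T → ∀ t ∈ Icc a T, ‖w' t‖ ≤ M := by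
  obtain ⟨C, -, hC⟩ := exists_forall_le_mul_of_le_add_integral (k := fun x => 1 + ‖q x‖)
    (intervalIntegrable_const.add hq.norm) fun x => by positivity
  set A := ‖w a‖ + ‖w' a‖ + ∫ x in a..b, ‖r x‖
  refine ⟨C * A, fun T hT hgT => ?_⟩
  obtain ⟨hwc, hw'c⟩ := continuousOn_of_eq_add_integral₂ hT.1 hgT
    (fun t ht => hw t ⟨ht.1, ht.2.trans hT.2⟩) fun t ht => hw' t ⟨ht.1, ht.2.trans hT.2⟩
  have hA0 : 0 ≤ A := add_nonneg (by positivity) (integral_nonneg hab fun x _ => norm_nonneg _)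
  have hgron : ∀ t ∈ Icc a T,
      ‖w t‖ + ‖w' t‖ ≤ A + ∫ x in a..t, (1 + ‖q x‖) * (‖w x‖ + ‖w' x‖) := by
    intro t ht
    have htb : uIcc a t ⊆ uIcc a b := uIcc_subset_uIcc_left (mem_uIcc_of_le ht.1 (ht.2.trans hT.2))
    have htT : uIcc a t ⊆ Icc a T := by rw [uIcc_of_le ht.1]; exact Icc_subset_Icc_right ht.2
    have hbd := norm_add_norm_le_of_eq_add_integral (hwc.mono htT) (hw'c.mono htT)
      (hgT.mono_set (uIcc_subset_uIcc_left (mem_uIcc_of_le ht.1 ht.2))) (hq.norm.mono_set htb)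
      (hr.mono_set htb) (fun x => norm_nonneg (q x))
      (fun x _ => by rw [hg x]; exact (norm_add_le _ _).trans (by rw [norm_mul]))
      (hw t ⟨ht.1, ht.2.trans hT.2⟩) (hw' t ⟨ht.1, ht.2.trans hT.2⟩)
    rw [uIoc_of_le ht.1, ← integral_of_le ht.1, ← integral_of_le ht.1] at hbd
    have hr_le : ∫ x in a..t, ‖r x‖ ≤ ∫ x in a..b, ‖r x‖ :=
      integral_mono_interval le_rfl ht.1 (ht.2.trans hT.2)
        (Eventually.of_forall fun x => norm_nonneg _) hr.norm
    linarith
  exact fun t ht => (le_add_of_nonneg_left (norm_nonneg _)).trans <|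
    hC T hT _ A hA0 (by fun_prop) (fun _ _ => by positivity) hgron t ht

/-- Where `g` is integrable on `[a, t]`, `w' t` obeys the bound of
`exists_forall_norm_le_of_intervalIntegrable`; elsewhere `∫ x in a..t, g x` is the junk value `0`
and `w' t = w' a`. So `w'` is bounded and measurable, hence integrable, which makes `w` continuous
and `g = q w + r` integrable. -/
theorem intervalIntegrable_of_eq_add_integral {q r : ℝ → 𝕜} (hab : a ≤ b)
    (hq : IntervalIntegrable q volume a b) (hr : IntervalIntegrable r volume a b)
    (hg : ∀ x, g x = q x * w x + r x)
    (hw : ∀ t ∈ Icc a b, w t = w a + ∫ x in a..t, w' x)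
    (hw' : ∀ t ∈ Icc a b, w' t = w' a + ∫ x in a..t, g x) :
    IntervalIntegrable g volume a b := by
  obtain ⟨M, hM⟩ := exists_forall_norm_le_of_intervalIntegrable hab hq hr hg hw hw'
  have hbdd : ∀ t ∈ Icc a b, ‖w' t‖ ≤ max M ‖w' a‖ := by
    intro t ht
    by_cases hgt : IntervalIntegrable g volume a t
    · exact (hM t ht hgt t ⟨ht.1, le_rfl⟩).trans (le_max_left _ _)
    · rw [hw' t ht, integral_undef hgt, add_zero]; exact le_max_right _ _
  have hmeas : AEStronglyMeasurable w' (volume.restrict (Ι a b)) := by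
    rw [uIoc_of_le hab]
    refine ((aestronglyMeasurable_const (b := w' a)).add
      ((aestronglyMeasurable_primitive g a).mono_measure
        (Measure.restrict_mono (Ioc_subset_Ioi_self.trans Ioi_subset_Ici_self) le_rfl))).congr ?_
    filter_upwards [ae_restrict_mem measurableSet_Ioc] with t ht
    exact (hw' t (Ioc_subset_Icc_self ht)).symm
  have hw'i : IntervalIntegrable w' volume a b := by
    refine (intervalIntegrable_const (c := max M ‖w' a‖)).mono_fun' hmeas ?_
    filter_upwards [ae_restrict_mem measurableSet_uIoc] with t ht
    rw [uIoc_of_le hab] at ht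
    exact hbdd t (Ioc_subset_Icc_self ht)
  have hwc := continuousOn_of_eq_add_integral hab hw'i hw
  rw [show g = fun x => q x * w x + r x from funext hg]
  exact (hq.mul_continuousOn (by rwa [uIcc_of_le hab])).add hr

theorem wronskian_sub_eq_integral {v v' h : ℝ → 𝕜} (hab : a ≤ b)
    (hg : IntervalIntegrable g volume a b) (hh : IntervalIntegrable h volume a b)
    (hw : ∀ t ∈ Icc a b, w t = w a + ∫ x in a..t, w' x)
    (hw' : ∀ t ∈ Icc a b, w' t = w' a + ∫ x in a..t, g x)
    (hv : ∀ t ∈ Icc a b, v t = v a + ∫ x in a..t, v' x)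
    (hv' : ∀ t ∈ Icc a b, v' t = v' a + ∫ x in a..t, h x) :
    (w b * v' b - w' b * v b) - (w a * v' a - w' a * v a)
      = ∫ x in a..b, (w x * h x - g x * v x) := by
  obtain ⟨hwc, hw'c⟩ := continuousOn_of_eq_add_integral₂ hab hg hw hw'
  obtain ⟨hvc, hv'c⟩ := continuousOn_of_eq_add_integral₂ hab hh hv hv'
  have hw'i := hw'c.intervalIntegrable_of_Icc (μ := volume) hab
  have hv'i := hv'c.intervalIntegrable_of_Icc (μ := volume) hab
  rw [← uIcc_of_le hab] at hv'c hwc hvc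
  calc (w b * v' b - w' b * v b) - (w a * v' a - w' a * v a)
      = (w b * v' b - w a * v' a) - (w' b * v b - w' a * v a) := by ring
    _ = (∫ x in a..b, (w' x * v' x + w x * h x)) - ∫ x in a..b, (g x * v x + w' x * v' x) := by
      rw [integral_mul_add_mul_eq_sub_of_eq_add_integral hab hw'i hh hw hv',
        integral_mul_add_mul_eq_sub_of_eq_add_integral hab hg hv'i hw' hv]
    _ = ∫ x in a..b, (w x * h x - g x * v x) := by
      rw [← integral_sub ((hw'i.mul_continuousOn hv'c).add (hh.continuousOn_mul hwc))
        ((hg.mul_continuousOn hvc).add (hw'i.mul_continuousOn hv'c))]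
      congr 1
      ext x
      ring

theorem exists_norm_add_norm_le_mul_of_eq_add_integral {m : ℝ → ℝ} (hab : a ≤ b)
    (hm : IntervalIntegrable m volume a b) (hm0 : ∀ x, 0 ≤ m x) :
    ∃ C, 0 ≤ C ∧ ∀ w w' g r : ℝ → 𝕜, IntervalIntegrable g volume a b →
      IntervalIntegrable r volume a b → (∀ x ∈ Icc a b, ‖g x‖ ≤ m x * ‖w x‖ + ‖r x‖) →
      (∀ t ∈ Icc a b, w t = w a + ∫ x in a..t, w' x) →
      (∀ t ∈ Icc a b, w' t = w' a + ∫ x in a..t, g x) →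
      ∀ t ∈ Icc a b, ‖w t‖ + ‖w' t‖ ≤ C * (‖w b‖ + ‖w' b‖ + ∫ x in a..b, ‖r x‖) := by
  obtain ⟨C, hC0, hC⟩ := exists_forall_le_mul_of_le_add_integral_right (k := fun x => 1 + m x)
    (intervalIntegrable_const.add hm) fun x => by linarith [hm0 x]
  refine ⟨C, hC0, fun w w' g r hg hr hgle hw hw' => ?_⟩
  obtain ⟨hwc, hw'c⟩ := continuousOn_of_eq_add_integral₂ hab hg hw hw'
  have hw'i := hw'c.intervalIntegrable_of_Icc (μ := volume) hab
  have hb : b ∈ Icc a b := ⟨hab, le_rfl⟩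
  have hgron : ∀ t ∈ Icc a b, ‖w t‖ + ‖w' t‖
      ≤ (‖w b‖ + ‖w' b‖ + ∫ x in a..b, ‖r x‖) + ∫ x in t..b, (1 + m x) * (‖w x‖ + ‖w' x‖) := by
    intro t ht
    have hsub : uIcc b t ⊆ uIcc a b := uIcc_subset_uIcc right_mem_uIcc (mem_uIcc_of_le ht.1 ht.2)
    have hsub' : uIcc b t ⊆ Icc a b := hsub.trans_eq (uIcc_of_le hab)
    have hbd := norm_add_norm_le_of_eq_add_integral (hwc.mono hsub') (hw'c.mono hsub')
      (hg.mono_set hsub) (hm.mono_set hsub) (hr.mono_set hsub) hm0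
      (fun x hx => hgle x (hsub' (uIoc_subset_uIcc hx)))
      (eq_add_integral_of_eq_add_integral hw'i hw hb ht)
      (eq_add_integral_of_eq_add_integral hg hw' hb ht)
    rw [uIoc_of_ge ht.2, ← integral_of_le ht.2, ← integral_of_le ht.2] at hbd
    have hr_le : ∫ x in t..b, ‖r x‖ ≤ ∫ x in a..b, ‖r x‖ :=
      integral_mono_interval ht.1 ht.2 le_rfl (Eventually.of_forall fun x => norm_nonneg _) hr.norm
    linarith
  exact hC _ _ (add_nonneg (by positivity) (integral_nonneg hab fun x _ => norm_nonneg _))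
    (by fun_prop) (fun _ _ => by positivity) hgron

end IntegralEquation

section Schrodinger

variable {q f v v' : ℝ → ℂ} {u u' : ℂ → ℝ → ℂ} {E : ℂ} {s : ℝ}

theorem integral_mul_eq_wronskian_sub {w w' : ℝ → ℂ} {z : ℂ} (hs : 0 ≤ s)
    (hq : IntervalIntegrable q volume 0 s) (hf : IntervalIntegrable f volume 0 s)
    (hw0 : w 0 = 0) (hw : ∀ t ∈ Icc 0 s, w t = w 0 + ∫ x in 0..t, w' x)
    (hw' : ∀ t ∈ Icc 0 s, w' t = w' 0 + ∫ x in 0..t, ((q x - z) * w x - f x))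
    (hv0 : v 0 = 0) (hv : ∀ t ∈ Icc 0 s, v t = v 0 + ∫ x in 0..t, v' x)
    (hv' : ∀ t ∈ Icc 0 s, v' t = v' 0 + ∫ x in 0..t, (q x - E) * v x) :
    ∫ x in 0..s, f x * v x = (w s * v' s - w' s * v s) - (z - E) * ∫ x in 0..s, w x * v x := by
  have hg := intervalIntegrable_of_eq_add_integral (r := fun x => -f x) hs
    (hq.sub intervalIntegrable_const) hf.neg (fun x => by ring) hw hw'
  have hh := intervalIntegrable_of_eq_add_integral (r := fun _ => 0) hs
    (hq.sub intervalIntegrable_const) intervalIntegrable_const (fun x => by ring) hv hv'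
  have hwc := (continuousOn_of_eq_add_integral₂ hs hg hw hw').1
  have hvc := (continuousOn_of_eq_add_integral₂ hs hh hv hv').1
  rw [← uIcc_of_le hs] at hwc hvc
  have hW := wronskian_sub_eq_integral hs hg hh hw hw' hv hv'
  rw [hw0, hv0, zero_mul, mul_zero, sub_zero, sub_zero] at hW
  rw [hW, ← intervalIntegral.integral_const_mul, ← intervalIntegral.integral_sub]
  · congr 1
    ext x
    ring
  · exact (hh.continuousOn_mul hwc).sub (hg.mul_continuousOn hvc)
  · exact ((hwc.mul hvc).intervalIntegrable).const_mul _

lemma exists_forall_norm_le_of_norm_sub_le_one (hs : 0 ≤ s) (hq : IntervalIntegrable q volume 0 s)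
    (hf : IntervalIntegrable f volume 0 s) :
    ∃ B, ∀ (z : ℂ) (w w' : ℝ → ℂ), ‖z - E‖ ≤ 1 → ‖w s‖ + ‖w' s‖ ≤ 1 →
      (∀ t ∈ Icc 0 s, w t = w 0 + ∫ x in 0..t, w' x) →
      (∀ t ∈ Icc 0 s, w' t = w' 0 + ∫ x in 0..t, ((q x - z) * w x - f x)) →
      ∀ t ∈ Icc 0 s, ‖w t‖ ≤ B := by
  obtain ⟨C, hC0, hC⟩ := exists_norm_add_norm_le_mul_of_eq_add_integral (𝕜 := ℂ) hs
    (m := fun x => ‖q x‖ + (‖E‖ + 1)) (hq.norm.add intervalIntegrable_const) fun x => by positivity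
  refine ⟨C * (1 + ∫ x in 0..s, ‖f x‖), fun z w w' hz hws hw hw' t ht => ?_⟩
  have hg := intervalIntegrable_of_eq_add_integral (r := fun x => -f x) hs
    (hq.sub intervalIntegrable_const) hf.neg (fun x => by ring) hw hw'
  have hgle : ∀ x ∈ Icc 0 s, ‖(q x - z) * w x - f x‖ ≤ (‖q x‖ + (‖E‖ + 1)) * ‖w x‖ + ‖f x‖ := by
    intro x _
    refine (norm_sub_le _ _).trans ?_
    rw [norm_mul]
    gcongr
    linarith [norm_sub_le (q x) z, norm_sub_norm_le z E]
  calc ‖w t‖ ≤ ‖w t‖ + ‖w' t‖ := le_add_of_nonneg_right (norm_nonneg _)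
    _ ≤ C * (‖w s‖ + ‖w' s‖ + ∫ x in 0..s, ‖f x‖) := hC w w' _ f hg hf hgle hw hw' t ht
    _ ≤ C * (1 + ∫ x in 0..s, ‖f x‖) := by gcongr

theorem integral_mul_eq_zero_of_small_boundary_values {Z : Set ℂ} (hs : 0 ≤ s)
    (hq : IntervalIntegrable q volume 0 s) (hf : IntervalIntegrable f volume 0 s)
    (hu0 : ∀ z ∈ Z, u z 0 = 0)
    (hu : ∀ z ∈ Z, ∀ t ∈ Icc 0 s, u z t = u z 0 + ∫ x in 0..t, u' z x)
    (hu' : ∀ z ∈ Z, ∀ t ∈ Icc 0 s, u' z t = u' z 0 + ∫ x in 0..t, ((q x - z) * u z x - f x))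
    (hsmall : ∀ δ > 0, ∃ z ∈ Z, ‖z - E‖ ≤ δ ∧ ‖u z s‖ + ‖u' z s‖ < δ)
    (hv0 : v 0 = 0) (hv : ∀ t ∈ Icc 0 s, v t = v 0 + ∫ x in 0..t, v' x)
    (hv' : ∀ t ∈ Icc 0 s, v' t = v' 0 + ∫ x in 0..t, (q x - E) * v x) :
    ∫ x in 0..s, f x * v x = 0 := by
  obtain ⟨B, hB⟩ := exists_forall_norm_le_of_norm_sub_le_one (E := E) hs hq hf
  have hvc := (continuousOn_of_eq_add_integral₂ hs (intervalIntegrable_of_eq_add_integral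
    (r := fun _ => 0) hs (hq.sub intervalIntegrable_const) intervalIntegrable_const
    (fun x => by ring) hv hv') hv hv').1
  obtain ⟨M, hM⟩ := isCompact_Icc.exists_bound_of_continuousOn hvc
  set D := ‖v' s‖ + ‖v s‖ + B * M * s
  have hle : ∀ δ ∈ Ioo (0 : ℝ) 1, ‖∫ x in 0..s, f x * v x‖ ≤ δ * D := by
    rintro δ ⟨hδ0, hδ1⟩
    obtain ⟨z, hz, hzE, hzs⟩ := hsmall δ hδ0
    have hus : ‖u z s‖ ≤ δ := by linarith [norm_nonneg (u' z s)]
    have hu's : ‖u' z s‖ ≤ δ := by linarith [norm_nonneg (u z s)]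
    have huB := hB z (u z) (u' z) (hzE.trans hδ1.le) (by linarith) (hu z hz) (hu' z hz)
    have huv : ‖∫ x in 0..s, u z x * v x‖ ≤ B * M * s := by
      refine (intervalIntegral.norm_integral_le_of_norm_le_const fun x hx => ?_).trans_eq
        (by rw [sub_zero, abs_of_nonneg hs])
      rw [uIoc_of_le hs] at hx
      rw [norm_mul]
      exact mul_le_mul (huB x (Ioc_subset_Icc_self hx)) (hM x (Ioc_subset_Icc_self hx))
        (norm_nonneg _) ((norm_nonneg _).trans (huB x (Ioc_subset_Icc_self hx)))
    rw [integral_mul_eq_wronskian_sub hs hq hf (hu0 z hz) (hu z hz) (hu' z hz) hv0 hv hv']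
    calc ‖(u z s * v' s - u' z s * v s) - (z - E) * ∫ x in 0..s, u z x * v x‖
        ≤ ‖u z s‖ * ‖v' s‖ + ‖u' z s‖ * ‖v s‖ + ‖z - E‖ * ‖∫ x in 0..s, u z x * v x‖ := by
          refine (norm_sub_le _ _).trans ?_
          rw [norm_mul (z - E)]
          gcongr
          exact (norm_sub_le _ _).trans_eq (by rw [norm_mul, norm_mul])
      _ ≤ δ * ‖v' s‖ + δ * ‖v s‖ + δ * (B * M * s) := by gcongr
      _ = δ * D := by ring
  have hlim : Tendsto (fun δ => δ * D) (𝓝[>] 0) (𝓝 0) :=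
    ((continuous_id.mul continuous_const).tendsto' 0 0 (by simp)).mono_left nhdsWithin_le_nhds
  exact norm_le_zero_iff.1 (ge_of_tendsto hlim (Eventually.mono (Ioo_mem_nhdsGT one_pos) hle))

end Schrodinger

/-- non-orthogonality criterion, half line: Let `V` be locally integrable on
`[0,∞)`, `E ∈ ℝ`, `f ∈ L²(0,∞)` supported in `[0,s]`. For `z` in the upper half plane let
`u z = (H_D - z)⁻¹ f`, i.e. the square-integrable solution of `-u'' + (V - z)u = f` with
`u(0) = 0`. If `inf { ‖(u_z(s), u_z'(s))‖ : Im z > 0, |z - E| ≤ δ } → 0` as `δ → 0+`, then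
`⟨u_{0,E}, f⟩ = ∫_0^∞ u_{0,E}(t) conj(f(t)) dt = 0`, where `u_{0,E}` solves
`-u'' + Vu = Eu`, `u(0) = 0`, `u'(0) = 1`. -/
theorem stmt16 (V : ℝ → ℝ) (hV : LocallyIntegrableOn V (Set.Ici 0) volume)
    (E s : ℝ) (hs : 0 < s)
    (f : ℝ → ℂ)
    (hf2 : MemLp f 2 (volume.restrict (Set.Ioi (0 : ℝ))))
    (hsupp : ∀ t : ℝ, t ∉ Set.Icc 0 s → f t = 0)
    (u u' : ℂ → ℝ → ℂ)
    (hsol : ∀ z : ℂ, 0 < z.im →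
      u z 0 = 0 ∧
      (∀ t : ℝ, u z t = ∫ r in (0:ℝ)..t, u' z r) ∧
      (∀ t : ℝ, u' z t = u' z 0 + ∫ r in (0:ℝ)..t, (((V r : ℂ) - z) * u z r - f r)) ∧
      IntegrableOn (fun t => ‖u z t‖ ^ 2) (Set.Ioi 0) volume)
    (hinf : ∀ δ > (0:ℝ), ∀ ε > (0:ℝ), ∃ z : ℂ,
      0 < z.im ∧ ‖z - (E : ℂ)‖ ≤ δ ∧ ‖u z s‖ + ‖u' z s‖ < ε)
    (u0 u0' : ℝ → ℂ)
    (h0 : u0 0 = 0)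
    (h0sol : ∀ t : ℝ, u0 t = ∫ r in (0:ℝ)..t, u0' r)
    (h0sol' : ∀ t : ℝ, u0' t = 1 + ∫ r in (0:ℝ)..t, ((V r : ℂ) - (E : ℂ)) * u0 r) :
    ∫ t in Set.Ioi (0 : ℝ), u0 t * (starRingEnd ℂ) (f t) = 0 := by
  have hVi : IntervalIntegrable (fun x => (V x : ℂ)) volume 0 s :=
    (intervalIntegrable_iff_integrableOn_Icc_of_le hs.le).2
      (hV.integrableOn_compact_subset Icc_subset_Ici_self isCompact_Icc).ofReal
  have hfi : IntervalIntegrable f volume 0 s :=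
    (intervalIntegrable_iff_integrableOn_Ioc_of_le hs.le).2
      ((hf2.mono_measure (Measure.restrict_mono Ioc_subset_Ioi_self le_rfl)).integrable one_le_two)
  have hconj := integral_mul_eq_zero_of_small_boundary_values (Z := {z | 0 < z.im}) (E := E)
    (v := fun t => starRingEnd ℂ (u0 t)) (v' := fun t => starRingEnd ℂ (u0' t)) hs.le hVi hfi
    (fun z hz => (hsol z hz).1)
    (fun z hz t _ => by rw [(hsol z hz).1, zero_add]; exact (hsol z hz).2.1 t)
    (fun z hz t _ => (hsol z hz).2.2.1 t)
    (fun δ hδ => hinf δ hδ δ hδ) (by simp [h0])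
    (fun t _ => by rw [h0sol t, h0, map_zero, zero_add, intervalIntegral_conj])
    (fun t _ => by
      rw [h0sol' t, h0sol' 0, integral_same, add_zero, map_add, map_one, ← intervalIntegral_conj]
      simp)
  calc ∫ t in Ioi 0, u0 t * starRingEnd ℂ (f t)
      = ∫ t in 0..s, u0 t * starRingEnd ℂ (f t) := by
        rw [integral_of_le hs.le]
        exact setIntegral_eq_of_subset_of_forall_sdiff_eq_zero measurableSet_Ioi Ioc_subset_Ioi_self
          fun t ht => by rw [hsupp t fun h => ht.2 ⟨ht.1, h.2⟩, map_zero, mul_zero]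
    _ = starRingEnd ℂ (∫ t in 0..s, f t * starRingEnd ℂ (u0 t)) := by
        rw [← intervalIntegral_conj]
        simp [mul_comm]
    _ = 0 := by rw [hconj, map_zero]
end
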